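/- Assume the Continuum Hypothesis, i.e. 2^ℵ₀ = ℵ₁. Then there exists a set F of entire functions (functions ℂ → ℂ analytic on all of ℂ) which is uncountable, yet for every point z ∈ ℂ the set of values {f(z) : f ∈ F} is countable. -/

import Mathlib

open Cardinal Set Filter

/-!
Under CH, index `ℂ` by `ω₁`, so that every proper initial segment is countable, and fix a
countable dense `D ⊆ ℂ`. Along any injective sequence of nodes `pₙ`, a Newton series
`∑ cₙ ∏_{k<n} (z - p_k)` whose coefficients are chosen one at a time, each small enough for
the series to stay entire, can be steered to take its value at `pₙ` in a prescribed dense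
set. This gives entire `f_i` with `f_i(z_j) ∈ D` for `j < i` and `f_i(z_i) ∉ D`. These functions
are pairwise distinct, hence uncountably many, and at `z_j` their values lie in `D`
except for the countably many `i ≤ j`.
-/

theorem exists_seq_forall_prefix {α : Type*} {P : ∀ n : ℕ, (Fin n → α) → α → Prop}
    (h : ∀ n x, ∃ y, P n x y) : ∃ c : ℕ → α, ∀ n, P n (fun i => c i) (c n) := by
  choose g hg using h
  refine ⟨Nat.strongRec fun n prev => g n fun i => prev i i.2, fun n => ?_⟩
  beta_reduce
  rw [Nat.strongRec_eq]
  exact hg _ _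

theorem Dense.exists_norm_le_add_mul_mem {𝕜 : Type*} [NormedField 𝕜] {T : Set 𝕜}
    (hT : Dense T) (b : 𝕜) {a : 𝕜} (ha : a ≠ 0) {ε : ℝ} (hε : 0 < ε) :
    ∃ c : 𝕜, ‖c‖ ≤ ε ∧ b + c * a ∈ T := by
  have ha' : 0 < ‖a‖ := norm_pos_iff.2 ha
  obtain ⟨d, hdT, hd⟩ := hT.exists_dist_lt b (mul_pos hε ha')
  refine ⟨(d - b) / a, ?_, by rwa [div_mul_cancel₀ _ ha, add_sub_cancel]⟩
  rw [norm_div, div_le_iff₀ ha', ← dist_eq_norm]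
  exact (dist_comm d b ▸ hd).le

section NewtonBasis

variable (p : ℕ → ℂ)

noncomputable def newtonBasis (n : ℕ) (z : ℂ) : ℂ :=
  ∏ k ∈ Finset.range n, (z - p k)

theorem differentiable_newtonBasis (n : ℕ) : Differentiable ℂ (newtonBasis p n) :=
  Differentiable.fun_finsetProd fun _ _ => differentiable_id.sub_const _

variable {p}

theorem newtonBasis_apply_of_lt {m n : ℕ} (h : m < n) : newtonBasis p n (p m) = 0 :=
  Finset.prod_eq_zero (Finset.mem_range.2 h) (sub_self _)

theorem newtonBasis_apply_self_ne_zero (hp : Function.Injective p) (n : ℕ) :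
    newtonBasis p n (p n) ≠ 0 :=
  Finset.prod_ne_zero_iff.2 fun _ hk => sub_ne_zero.2 fun h =>
    (Finset.mem_range.1 hk).ne' (hp h)

theorem norm_newtonBasis_le {R : ℝ} {w : ℂ} (hw : ‖w‖ ≤ R) (n : ℕ) :
    ‖newtonBasis p n w‖ ≤ ∏ k ∈ Finset.range n, (R + ‖p k‖) := by
  rw [newtonBasis, norm_prod]
  exact Finset.prod_le_prod (fun _ _ => norm_nonneg _) fun k _ =>
    (norm_sub_le _ _).trans (by gcongr)

variable (p)

-- Beyond `k + 1 ≥ R` each factor beats `R + ‖p k‖` by a factor `2`, so the majorant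
-- `newtonWeight p n * ∏ k ∈ Finset.range n, (R + ‖p k‖)` decays geometrically.
noncomputable def newtonWeight (n : ℕ) : ℝ :=
  ∏ k ∈ Finset.range n, (2 * (k + 1 + ‖p k‖))⁻¹

theorem newtonWeight_pos (n : ℕ) : 0 < newtonWeight p n :=
  Finset.prod_pos fun _ _ => by positivity

theorem summable_newtonWeight_mul_prod {R : ℝ} (hR : 0 ≤ R) :
    Summable fun n => newtonWeight p n * ∏ k ∈ Finset.range n, (R + ‖p k‖) := by
  refine summable_of_ratio_norm_eventually_le (r := 1 / 2) (by norm_num) ?_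
  filter_upwards [eventually_ge_atTop ⌈R⌉₊] with n hn
  have hRn : R ≤ n := (Nat.le_ceil R).trans (by exact_mod_cast hn)
  have hratio : (R + ‖p n‖) / (2 * (n + 1 + ‖p n‖)) ≤ 1 / 2 := by
    rw [div_le_iff₀ (by positivity)]
    linarith
  have hterm : 0 ≤ newtonWeight p n * ∏ k ∈ Finset.range n, (R + ‖p k‖) :=
    mul_nonneg (newtonWeight_pos p n).le (Finset.prod_nonneg fun _ _ => by positivity)
  have hsucc : newtonWeight p (n + 1) * ∏ k ∈ Finset.range (n + 1), (R + ‖p k‖) =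
      (newtonWeight p n * ∏ k ∈ Finset.range n, (R + ‖p k‖)) *
        ((R + ‖p n‖) / (2 * (n + 1 + ‖p n‖))) := by
    simp only [newtonWeight, Finset.prod_range_succ]
    ring
  rw [hsucc, Real.norm_of_nonneg hterm, Real.norm_of_nonneg (mul_nonneg hterm (by positivity)),
    mul_comm (1 / 2 : ℝ)]
  exact mul_le_mul_of_nonneg_left hratio hterm

theorem differentiable_tsum_mul_newtonBasis {c : ℕ → ℂ} (hc : ∀ n, ‖c n‖ ≤ newtonWeight p n) :
    Differentiable ℂ fun z => ∑' n, c n * newtonBasis p n z := by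
  intro z
  have hR : 0 ≤ ‖z‖ + 1 := by positivity
  have hdiff : DifferentiableOn ℂ (fun z => ∑' n, c n * newtonBasis p n z)
      (Metric.ball 0 (‖z‖ + 1)) := by
    refine Complex.differentiableOn_tsum_of_summable_norm (summable_newtonWeight_mul_prod p hR)
      (fun n => ((differentiable_newtonBasis p n).const_mul (c n)).differentiableOn)
      Metric.isOpen_ball fun n w hw => ?_
    rw [norm_mul]
    exact mul_le_mul (hc n) (norm_newtonBasis_le (mem_ball_zero_iff.1 hw).le n)
      (norm_nonneg _) (newtonWeight_pos p n).le
  exact hdiff.differentiableAt (Metric.isOpen_ball.mem_nhds (by simp))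

end NewtonBasis

theorem exists_differentiable_apply_mem_of_injective {p : ℕ → ℂ} (hp : Function.Injective p)
    {T : ℕ → Set ℂ} (hT : ∀ n, Dense (T n)) :
    ∃ f : ℂ → ℂ, Differentiable ℂ f ∧ ∀ n, f (p n) ∈ T n := by
  obtain ⟨c, hc⟩ := exists_seq_forall_prefix (P := fun n x y => ‖y‖ ≤ newtonWeight p n ∧
      ∑ i, x i * newtonBasis p i (p n) + y * newtonBasis p n (p n) ∈ T n) fun n x =>
    (hT n).exists_norm_le_add_mul_mem _ (newtonBasis_apply_self_ne_zero hp n)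
      (newtonWeight_pos p n)
  refine ⟨_, differentiable_tsum_mul_newtonBasis p fun n => (hc n).1, fun n => ?_⟩
  have hfinite : ∀ k ∉ Finset.range (n + 1), c k * newtonBasis p k (p n) = 0 := fun k hk => by
    rw [newtonBasis_apply_of_lt (by simpa using hk), mul_zero]
  rw [tsum_eq_sum hfinite, Finset.sum_range_succ]
  simpa [Fin.sum_univ_eq_sum_range (fun i => c i * newtonBasis p i (p n))] using (hc n).2

theorem exists_differentiable_apply_mem_of_countable {S : Set ℂ} (hS : S.Countable)
    {T : ℂ → Set ℂ} (hT : ∀ z, Dense (T z)) :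
    ∃ f : ℂ → ℂ, Differentiable ℂ f ∧ ∀ z ∈ S, f z ∈ T z := by
  -- pad `S` to a countably infinite set so that it can be enumerated without repetition
  set S' := S ∪ range ((↑) : ℕ → ℂ)
  have : Countable S' := (hS.union (countable_range _)).to_subtype
  have : Infinite S' :=
    ((infinite_range_of_injective Nat.cast_injective).mono subset_union_right).to_subtype
  obtain ⟨e⟩ : Nonempty (ℕ ≃ S') := nonempty_equiv_of_countable
  obtain ⟨f, hf, hfT⟩ := exists_differentiable_apply_mem_of_injective
    (Subtype.val_injective.comp e.injective) fun n => hT (e n)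
  refine ⟨f, hf, fun z hz => ?_⟩
  simpa using hfT (e.symm ⟨z, .inl hz⟩)

theorem exists_uncountable_family_of_countable_Iio {ι : Type*} [LinearOrder ι] (e : ι ≃ ℂ)
    (hι : ∀ i : ι, (Iio i).Countable) :
    ∃ F : Set (ℂ → ℂ),
      (∀ f ∈ F, Differentiable ℂ f) ∧
      ¬ F.Countable ∧
      ∀ z : ℂ, ((fun f : ℂ → ℂ => f z) '' F).Countable := by
  obtain ⟨D, hDc, hDd⟩ := TopologicalSpace.exists_countable_dense ℂ
  have hIic : ∀ i : ι, (Iic i).Countable := fun i => by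
    rw [← Iio_insert]
    exact (hι i).insert i
  -- `f i` takes values in `D` at the points before `e i` and a value outside `D` at `e i`
  choose f hf_diff hf_mem using fun i => exists_differentiable_apply_mem_of_countable
    ((hIic i).image e) (T := fun z => if e.symm z < i then D else Dᶜ) fun z => by
      split_ifs
      exacts [hDd, hDc.dense_compl ℂ]
  have hf_lt : ∀ {i j}, j < i → f i (e j) ∈ D := fun {i j} h => by
    simpa [h] using hf_mem i (e j) (mem_image_of_mem e h.le)
  have hf_self : ∀ i, f i (e i) ∉ D := fun i => by
    simpa using hf_mem i (e i) (mem_image_of_mem e le_rfl)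
  have hf_inj : Function.Injective f := by
    intro i j hij
    by_contra hne
    rcases lt_or_gt_of_ne hne with h | h
    · exact hf_self i (hij ▸ hf_lt h)
    · exact hf_self j (hij ▸ hf_lt h)
  refine ⟨range f, forall_mem_range.2 hf_diff, fun hF => ?_, fun z => ?_⟩
  · have hcount := (hF.preimage hf_inj).image e
    rw [preimage_range, image_univ, e.range_eq_univ] at hcount
    exact not_countable_complex hcount
  · refine (hDc.union ((hIic (e.symm z)).image fun i => f i z)).mono ?_
    rintro _ ⟨_, ⟨i, rfl⟩, rfl⟩
    rcases lt_or_ge (e.symm z) i with h | h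
    · exact .inl (by simpa using hf_lt h)
    · exact .inr ⟨i, h, rfl⟩

/-- Erdős' theorem (the other direction of Wetzel's problem): assuming the
Continuum Hypothesis, there is an uncountable family of entire functions whose
set of values at each point of `ℂ` is countable. -/
theorem exists_uncountable_family_of_CH
    (hCH : (2 : Cardinal) ^ Cardinal.aleph0 = Cardinal.aleph 1) :
    ∃ F : Set (ℂ → ℂ),
      (∀ f ∈ F, Differentiable ℂ f) ∧
      ¬ F.Countable ∧
      ∀ z : ℂ, ((fun f : ℂ → ℂ => f z) '' F).Countable := by
  have hC : #ℂ = ℵ₁ := by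
    refine lift_injective ?_
    rw [mk_complex, lift_continuum, lift_aleph, Ordinal.lift_one, ← two_power_aleph0, hCH]
  obtain ⟨e⟩ : Nonempty ((ℵ₁ : Cardinal.{0}).ord.ToType ≃ ℂ) := by
    rw [← Cardinal.eq, hC, mk_ord_toType]
  exact exists_uncountable_family_of_countable_Iio e fun i =>
    le_aleph0_iff_set_countable.1 (lt_aleph_one_iff.1 (by simpa using mk_Iio_lt i))
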